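/- arXiv:2108.01302 — 3 statements merged into one kernel-verified Lean document; each statement's English description precedes it below -/
import Mathlib

section
/- If ψ : G → ℝ is a uniform limit of trigonometric polynomials on a discrete abelian group G and ψ(0) > 0, then {g ∈ G : ψ(g) ≠ 0} contains a Bohr neighborhood of 0. -/
/-- `S` contains a Bohr neighborhood of `0`. -/
def ContainsBohrNhd {G : Type*} [AddCommGroup G] (S : Set G) : Prop :=
  ∃ (k : ℕ) (χ : Fin k → AddChar G ℂ) (ε : ℝ), 0 < ε ∧ (∀ i g, ‖χ i g‖ = 1) ∧
    ∀ g : G, (∀ i, ‖χ i g - 1‖ < ε) → g ∈ S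

/-- `ψ : G → ℂ` is a trigonometric polynomial: a finite linear combination of
characters of `G` (homomorphisms into the circle group). -/
def IsTrigPoly {G : Type*} [AddCommGroup G] (p : G → ℂ) : Prop :=
  ∃ (d : ℕ) (c : Fin d → ℂ) (χ : Fin d → AddChar G ℂ),
    (∀ i g, ‖χ i g‖ = 1) ∧ ∀ g, p g = ∑ j, c j * χ j g

theorem stmt1 {G : Type*} [AddCommGroup G] (ψ : G → ℝ)
    (hap : ∀ ε : ℝ, 0 < ε → ∃ p : G → ℂ, IsTrigPoly p ∧ ∀ g, ‖(ψ g : ℂ) - p g‖ ≤ ε)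
    (hpos : 0 < ψ 0) :
    ContainsBohrNhd {g : G | ψ g ≠ 0} := by
  set ε : ℝ := ψ 0 / 4 with hε
  have hεpos : 0 < ε := by positivity
  obtain ⟨p, ⟨d, c, χ, hχ, hp⟩, happrox⟩ := hap ε hεpos
  set C : ℝ := ∑ j, ‖c j‖ with hC
  have hCnn : 0 ≤ C := Finset.sum_nonneg fun j _ => norm_nonneg _
  set δ : ℝ := ε / (C + 1) with hδ
  have hδpos : 0 < δ := by positivity
  refine ⟨d, χ, δ, hδpos, hχ, fun g hg => ?_⟩
  -- Bound ‖p g - p 0‖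
  have hpdiff : ‖p g - p 0‖ ≤ C * δ := by
    rw [hp g, hp 0, ← Finset.sum_sub_distrib]
    calc ‖∑ j, (c j * χ j g - c j * χ j 0)‖
        ≤ ∑ j, ‖c j * χ j g - c j * χ j 0‖ := norm_sum_le _ _
      _ ≤ ∑ j, ‖c j‖ * δ := by
          apply Finset.sum_le_sum
          intro j _
          rw [← mul_sub, norm_mul]
          have : χ j 0 = 1 := AddChar.map_zero_eq_one (χ j)
          rw [this]
          exact mul_le_mul_of_nonneg_left (le_of_lt (hg j)) (norm_nonneg _)
      _ = C * δ := by rw [← Finset.sum_mul]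
  have hCδ : C * δ < ε := by
    rw [hδ]
    rw [div_eq_mul_inv, ← mul_assoc]
    have h1 : C * ε * (C + 1)⁻¹ < (C + 1) * ε * (C + 1)⁻¹ := by
      apply mul_lt_mul_of_pos_right
      · apply mul_lt_mul_of_pos_right (by linarith) hεpos
      · positivity
    calc C * ε * (C + 1)⁻¹ < (C + 1) * ε * (C + 1)⁻¹ := h1
      _ = ε := by field_simp
  have h1 := happrox g
  have h2 := happrox 0
  have key : ‖(ψ g : ℂ) - (ψ 0 : ℂ)‖ < 3 * ε := by
    calc ‖(ψ g : ℂ) - (ψ 0 : ℂ)‖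
        = ‖((ψ g : ℂ) - p g) + (p g - p 0) + (p 0 - (ψ 0 : ℂ))‖ := by congr 1; ring
      _ ≤ ‖(ψ g : ℂ) - p g‖ + ‖p g - p 0‖ + ‖p 0 - (ψ 0 : ℂ)‖ := norm_add₃_le
      _ = ‖(ψ g : ℂ) - p g‖ + ‖p g - p 0‖ + ‖(ψ 0 : ℂ) - p 0‖ := by rw [norm_sub_rev (p 0)]
      _ < ε + ε + ε := by
          have := hpdiff.trans_lt hCδ
          linarith
      _ = 3 * ε := by ring
  have : |ψ g - ψ 0| < 3 * ε := by
    rw [← Complex.ofReal_sub] at *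
    rwa [Complex.norm_real] at key
  have : ψ g > 0 := by
    rw [abs_lt] at this
    rw [hε] at this
    linarith [this.1]
  exact ne_of_gt this
end

section
/- van der Corput lemma: Let G be a countable abelian group with Følner sequence (F_n), and let (x_g)_{g∈G} be a bounded family in a Hilbert space H. If lim_{k→∞} (1/|F_k|) Σ_{h∈F_k} lim_{n→∞} (1/|F_n|) Σ_{g∈F_n} ⟨x_{g+h}, x_g⟩ = 0 (all inner limits assumed to exist), then lim_{n→∞} ‖(1/|F_n|) Σ_{g∈F_n} x_g‖ = 0. -/
/-!
Since `L` is a limit of Gram sums, it is a positive-definite function on `G`, so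
`⟪c, d⟫ = ∑ conj (c a) * d b * L (a - b)` is a semi-inner product on finitely supported
`c d : G →₀ ℂ` (the GNS construction), on which translations act isometrically. Let `a k` be
the normalized indicator of `F k`.

Averaging `x` first over the translates by `F k` changes its Følner averages only by `o(1)`, and
by Cauchy–Schwarz the norm of the resulting average is asymptotically at most `‖a k‖`. So it
suffices that `‖a k‖ → 0`, a mean ergodic theorem in the GNS space: the norms `‖a k‖` converge
to their infimum `I`, half the sum of `a k` and `a m` still has norm at least `I`, and
`⟪a k, a m⟫ → 0` as `k → ∞` because the Følner averages of `L` vanish; the parallelogram law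
then forces `I = 0`.
-/

open Filter

/-- `F` is a Følner sequence in `G`. -/
def IsFolner {G : Type*} [AddCommGroup G] [DecidableEq G] (F : ℕ → Finset G) : Prop :=
  (∀ n, (F n).Nonempty) ∧ ∀ g : G,
    Tendsto (fun n => ((symmDiff (F n) ((F n).image (g + ·))).card : ℝ) / (F n).card)
      atTop (nhds 0)

open Finset Topology ComplexConjugate

theorem norm_sum_le_card_mul {ι E : Type*} [SeminormedAddCommGroup E] {s : Finset ι}
    {u : ι → E} {K : ℝ} (hu : ∀ i, ‖u i‖ ≤ K) : ‖∑ i ∈ s, u i‖ ≤ s.card * K := by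
  simpa using norm_sum_le_of_le s fun i _ => hu i

theorem norm_avg_le_sqrt_avg_norm_sq {ι E : Type*} [SeminormedAddCommGroup E] [NormedSpace ℂ E]
    (s : Finset ι) (u : ι → E) :
    ‖(s.card : ℂ)⁻¹ • ∑ i ∈ s, u i‖ ≤ √((s.card : ℝ)⁻¹ * ∑ i ∈ s, ‖u i‖ ^ 2) := by
  rw [Real.le_sqrt (norm_nonneg _) (by positivity), norm_smul, norm_inv, Complex.norm_natCast,
    mul_pow]
  calc ((s.card : ℝ)⁻¹) ^ 2 * ‖∑ i ∈ s, u i‖ ^ 2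
      ≤ ((s.card : ℝ)⁻¹) ^ 2 * (s.card * ∑ i ∈ s, ‖u i‖ ^ 2) := by
        gcongr
        exact (pow_le_pow_left₀ (norm_nonneg _) (norm_sum_le _ _) 2).trans
          sq_sum_le_card_mul_sum_sq
    _ = (s.card : ℝ)⁻¹ * ∑ i ∈ s, ‖u i‖ ^ 2 := by
        rcases eq_or_ne (s.card : ℝ) 0 with hs | hs
        · simp [hs]
        · field_simp

theorem bddBelow_range_norm {ι E : Type*} [SeminormedAddCommGroup E] (f : ι → E) :
    BddBelow (Set.range fun i => ‖f i‖) :=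
  ⟨0, by rintro _ ⟨i, rfl⟩; exact norm_nonneg _⟩

theorem tendsto_iInf_of_le_add {ρ : ℕ → ℝ} {e : ℕ → ℕ → ℝ} (hρ : BddBelow (Set.range ρ))
    (he : ∀ m, Tendsto (e m) atTop (𝓝 0)) (hle : ∀ m k, ρ k ≤ ρ m + e m k) :
    Tendsto ρ atTop (𝓝 (⨅ k, ρ k)) := by
  refine tendsto_order.2 ⟨fun a ha => .of_forall fun k => ha.trans_le (ciInf_le hρ k),
    fun a ha => ?_⟩
  obtain ⟨m, hm⟩ := exists_lt_of_ciInf_lt ha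
  filter_upwards [(he m).eventually_lt_const (sub_pos.2 hm)] with k hk
  linarith [hle m k]

theorem tendsto_zero_of_forall_exists_le_tendsto {u b : ℕ → ℝ} (hu : ∀ n, 0 ≤ u n)
    (hb : Tendsto b atTop (𝓝 0))
    (hr : ∀ k, ∃ r : ℕ → ℝ, Tendsto r atTop (𝓝 (b k)) ∧ ∀ n, u n ≤ r n) :
    Tendsto u atTop (𝓝 0) := by
  refine tendsto_order.2 ⟨fun a ha => .of_forall fun n => ha.trans_le (hu n), fun a ha => ?_⟩
  obtain ⟨k, hk⟩ := (hb.eventually_lt_const ha).exists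
  obtain ⟨r, hr, hle⟩ := hr k
  filter_upwards [hr.eventually_lt_const hk] with n hn
  exact (hle n).trans_lt hn

section FolnerAverage

variable {G : Type*} [AddCommGroup G] [DecidableEq G]
  {E : Type*} [SeminormedAddCommGroup E] [NormedSpace ℂ E]

theorem norm_avg_add_sub_avg_le (s : Finset G) (h : G) {u : G → E} {K : ℝ}
    (hu : ∀ g, ‖u g‖ ≤ K) :
    ‖(s.card : ℂ)⁻¹ • ∑ g ∈ s, u (g + h) - (s.card : ℂ)⁻¹ • ∑ g ∈ s, u g‖
      ≤ (symmDiff s (s.image (h + ·))).card / s.card * K := by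
  set t := s.image (h + ·)
  have hshift : ∑ g ∈ s, u (g + h) = ∑ g ∈ t, u g := by
    rw [sum_image fun a _ b _ hab => add_left_cancel hab]
    simp_rw [add_comm]
  have hdiff : ‖∑ g ∈ t, u g - ∑ g ∈ s, u g‖ ≤ (symmDiff s t).card * K := by
    rw [← sum_sdiff_sub_sum_sdiff, symmDiff_def, sup_eq_union,
      card_union_of_disjoint disjoint_sdiff_sdiff, Nat.cast_add, add_comm, add_mul]
    exact norm_sub_le_of_le (norm_sum_le_card_mul hu) (norm_sum_le_card_mul hu)
  rw [hshift, ← smul_sub, norm_smul, norm_inv, Complex.norm_natCast, div_mul_eq_mul_div,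
    div_eq_inv_mul]
  gcongr

variable {F : ℕ → Finset G}

theorem IsFolner.tendsto_avg_add_sub_avg (hF : IsFolner F) (h : G) {u : G → E} {K : ℝ}
    (hu : ∀ g, ‖u g‖ ≤ K) :
    Tendsto (fun n => ((F n).card : ℂ)⁻¹ • ∑ g ∈ F n, u (g + h)
      - ((F n).card : ℂ)⁻¹ • ∑ g ∈ F n, u g) atTop (𝓝 0) :=
  squeeze_zero_norm (fun n => norm_avg_add_sub_avg_le (F n) h hu)
    (by simpa using (hF.2 h).mul_const K)

theorem IsFolner.tendsto_avg_add (hF : IsFolner F) (h : G) {u : G → E} {K : ℝ}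
    (hu : ∀ g, ‖u g‖ ≤ K) {l : E}
    (hl : Tendsto (fun n => ((F n).card : ℂ)⁻¹ • ∑ g ∈ F n, u g) atTop (𝓝 l)) :
    Tendsto (fun n => ((F n).card : ℂ)⁻¹ • ∑ g ∈ F n, u (g + h)) atTop (𝓝 l) := by
  simpa using (hF.tendsto_avg_add_sub_avg h hu).add hl

end FolnerAverage

section PositiveDefinite

variable {G : Type*} [AddCommGroup G]

noncomputable def pdForm (L : G → ℂ) (c d : G →₀ ℂ) : ℂ :=
  c.sum fun a α => d.sum fun b β => conj α * β * L (a - b)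

structure IsPositiveDefinite (L : G → ℂ) : Prop where
  conj_apply : ∀ h, conj (L h) = L (-h)
  re_pdForm_self_nonneg : ∀ c, 0 ≤ (pdForm L c c).re

theorem pdForm_add_left (L : G → ℂ) (c c' d : G →₀ ℂ) :
    pdForm L (c + c') d = pdForm L c d + pdForm L c' d :=
  Finsupp.sum_add_index' (by simp) fun a α α' => by
    simp only [map_add, add_mul, Finsupp.sum_add]

theorem pdForm_smul_left (L : G → ℂ) (r : ℂ) (c d : G →₀ ℂ) :
    pdForm L (r • c) d = conj r * pdForm L c d := by
  rw [pdForm, Finsupp.sum_smul_index' (by simp), pdForm, Finsupp.mul_sum]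
  refine Finsupp.sum_congr fun a _ => ?_
  rw [Finsupp.mul_sum]
  refine Finsupp.sum_congr fun b _ => ?_
  simp only [smul_eq_mul, map_mul]
  ring

theorem pdForm_mapDomain_add (L : G → ℂ) (h : G) (c d : G →₀ ℂ) :
    pdForm L (c.mapDomain (h + ·)) (d.mapDomain (h + ·)) = pdForm L c d := by
  rw [pdForm, Finsupp.sum_mapDomain_index (by simp) fun a α α' => by
    simp only [map_add, add_mul, Finsupp.sum_add]]
  refine Finsupp.sum_congr fun a _ => ?_
  rw [Finsupp.sum_mapDomain_index (by simp) fun b β β' => by ring]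
  simp_rw [add_sub_add_left_eq_sub]

theorem pdForm_single_single (L : G → ℂ) (a b : G) :
    pdForm L (Finsupp.single a 1) (Finsupp.single b 1) = L (a - b) := by
  rw [pdForm, Finsupp.sum_single_index (by simp), Finsupp.sum_single_index (by simp)]
  simp

theorem IsPositiveDefinite.conj_pdForm {L : G → ℂ} (hL : IsPositiveDefinite L)
    (c d : G →₀ ℂ) : conj (pdForm L d c) = pdForm L c d := by
  simp only [pdForm, Finsupp.sum, map_sum, map_mul, Complex.conj_conj]
  rw [Finset.sum_comm]
  refine Finset.sum_congr rfl fun a _ => Finset.sum_congr rfl fun b _ => ?_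
  rw [hL.conj_apply, neg_sub]
  ring

/-- `G →₀ ℂ` with the possibly degenerate inner product `pdForm L` (the GNS space of `L`). -/
def GNS (_L : G → ℂ) : Type _ := G →₀ ℂ

namespace GNS

variable (L : G → ℂ)

noncomputable instance : AddCommGroup (GNS L) := inferInstanceAs (AddCommGroup (G →₀ ℂ))

noncomputable instance : Module ℂ (GNS L) := inferInstanceAs (Module ℂ (G →₀ ℂ))

noncomputable def single (a : G) : GNS L := Finsupp.single a 1

noncomputable def shift (h : G) : Module.End ℂ (GNS L) := Finsupp.lmapDomain ℂ ℂ (h + ·)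

theorem shift_single (h a : G) : shift L h (single L a) = single L (h + a) :=
  Finsupp.mapDomain_single

theorem commute_shift (h h' : G) : Commute (shift L h) (shift L h') := by
  refine LinearMap.ext fun (c : G →₀ ℂ) => ?_
  change Finsupp.mapDomain _ (Finsupp.mapDomain _ c)
    = Finsupp.mapDomain _ (Finsupp.mapDomain _ c)
  rw [← Finsupp.mapDomain_comp, ← Finsupp.mapDomain_comp]
  congr 1
  funext a
  simp only [Function.comp_apply, add_left_comm]

noncomputable def avgOp (F : ℕ → Finset G) (m : ℕ) : Module.End ℂ (GNS L) :=
  ((F m).card : ℂ)⁻¹ • ∑ h ∈ F m, shift L h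

noncomputable def folnerMean (F : ℕ → Finset G) (k : ℕ) : GNS L := avgOp L F k (single L 0)

variable {F : ℕ → Finset G}

theorem folnerMean_eq (k : ℕ) :
    folnerMean L F k = ((F k).card : ℂ)⁻¹ • ∑ h ∈ F k, single L h := by
  simp [folnerMean, avgOp, shift_single]

theorem shift_folnerMean (h : G) (k : ℕ) :
    shift L h (folnerMean L F k) = ((F k).card : ℂ)⁻¹ • ∑ g ∈ F k, single L (g + h) := by
  simp [folnerMean_eq, shift_single, add_comm h]

theorem avgOp_folnerMean_comm (m k : ℕ) :
    avgOp L F m (folnerMean L F k) = avgOp L F k (folnerMean L F m) := by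
  have : Commute (avgOp L F m) (avgOp L F k) :=
    ((Commute.sum_left _ _ _ fun h _ => Commute.sum_right _ _ _ fun h' _ =>
      commute_shift L h h').smul_left _).smul_right _
  exact LinearMap.congr_fun this.eq (single L 0)

variable [Fact (IsPositiveDefinite L)]

noncomputable instance core : PreInnerProductSpace.Core ℂ (GNS L) where
  inner := pdForm L
  conj_inner_symm := Fact.out (p := IsPositiveDefinite L).conj_pdForm
  re_inner_nonneg := Fact.out (p := IsPositiveDefinite L).re_pdForm_self_nonneg
  add_left := pdForm_add_left L
  smul_left c d r := pdForm_smul_left L r c d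

noncomputable instance : SeminormedAddCommGroup (GNS L) :=
  InnerProductSpace.Core.toSeminormedAddCommGroup (𝕜 := ℂ)

noncomputable instance : InnerProductSpace ℂ (GNS L) := InnerProductSpace.ofCore (core L)

local notation "⟪" c ", " d "⟫" => (inner ℂ c d : ℂ)

theorem inner_single_single (a b : G) : ⟪single L a, single L b⟫ = L (a - b) :=
  pdForm_single_single L a b

theorem inner_shift_shift (h : G) (c d : GNS L) : ⟪shift L h c, shift L h d⟫ = ⟪c, d⟫ :=
  pdForm_mapDomain_add L h c d

theorem norm_shift (h : G) (c : GNS L) : ‖shift L h c‖ = ‖c‖ := by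
  simp only [norm_eq_sqrt_re_inner (𝕜 := ℂ), inner_shift_shift]

theorem norm_single (a : G) : ‖single L a‖ = ‖single L 0‖ := by
  rw [← norm_shift L a (single L 0), shift_single, add_zero]

theorem norm_le_norm_single_zero_sq (h : G) : ‖L h‖ ≤ ‖single L 0‖ ^ 2 := by
  simpa [inner_single_single, norm_single L h, sq] using
    norm_inner_le_norm (𝕜 := ℂ) (single L h) (single L 0)

theorem norm_avgOp_le (m : ℕ) (c : GNS L) : ‖avgOp L F m c‖ ≤ ‖c‖ := by
  simp only [avgOp, LinearMap.smul_apply, LinearMap.sum_apply, norm_smul, norm_inv,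
    Complex.norm_natCast]
  calc ((F m).card : ℝ)⁻¹ * ‖∑ h ∈ F m, shift L h c‖
      ≤ ((F m).card : ℝ)⁻¹ * ((F m).card * ‖c‖) := by
        gcongr
        exact norm_sum_le_card_mul fun h => (norm_shift L h c).le
    _ ≤ ‖c‖ := by
        rw [← mul_assoc]
        exact mul_le_of_le_one_left (norm_nonneg _)
          (inv_mul_le_one_of_le₀ le_rfl (by positivity))

theorem inner_folnerMean_folnerMean (k m : ℕ) :
    ⟪folnerMean L F k, folnerMean L F m⟫
      = ((F m).card : ℂ)⁻¹ * ∑ h' ∈ F m, ((F k).card : ℂ)⁻¹ • ∑ h ∈ F k, L (h + -h') := by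
  simp only [folnerMean_eq, inner_smul_left, inner_smul_right, sum_inner, inner_sum,
    inner_single_single, map_inv₀, map_natCast, smul_eq_mul, ← sub_eq_add_neg, mul_sum]

theorem norm_folnerMean_le (m k : ℕ) : ‖folnerMean L F k‖
    ≤ ‖folnerMean L F m‖ + ‖avgOp L F m (folnerMean L F k) - folnerMean L F k‖ := by
  calc ‖folnerMean L F k‖
      ≤ ‖avgOp L F m (folnerMean L F k)‖
        + ‖avgOp L F m (folnerMean L F k) - folnerMean L F k‖ :=
        norm_le_norm_add_norm_sub _ _
    _ ≤ _ := by
        rw [avgOp_folnerMean_comm]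
        gcongr
        exact norm_avgOp_le L k _

variable [DecidableEq G]

theorem tendsto_shift_folnerMean_sub (hF : IsFolner F) (h : G) :
    Tendsto (fun k => shift L h (folnerMean L F k) - folnerMean L F k) atTop (𝓝 0) :=
  (hF.tendsto_avg_add_sub_avg h fun a => (norm_single L a).le).congr fun k => by
    rw [shift_folnerMean, folnerMean_eq]

theorem tendsto_avgOp_folnerMean_sub (hF : IsFolner F) (m : ℕ) :
    Tendsto (fun k => avgOp L F m (folnerMean L F k) - folnerMean L F k) atTop (𝓝 0) := by
  have hm : ((F m).card : ℂ) ≠ 0 := by exact_mod_cast (hF.1 m).card_pos.ne'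
  have key : ∀ c : GNS L,
      avgOp L F m c - c = ((F m).card : ℂ)⁻¹ • ∑ h ∈ F m, (shift L h c - c) := fun c => by
    rw [sum_sub_distrib, sum_const, ← Nat.cast_smul_eq_nsmul ℂ, smul_sub, smul_smul,
      inv_mul_cancel₀ hm, one_smul]
    simp [avgOp]
  simpa only [key, sum_const_zero, smul_zero] using
    (tendsto_finsetSum _ fun h _ => tendsto_shift_folnerMean_sub L hF h).const_smul
      ((F m).card : ℂ)⁻¹

theorem tendsto_inner_folnerMean (hF : IsFolner F)
    (hLavg : Tendsto (fun k => ((F k).card : ℂ)⁻¹ • ∑ h ∈ F k, L h) atTop (𝓝 0)) (m : ℕ) :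
    Tendsto (fun k => ⟪folnerMean L F k, folnerMean L F m⟫) atTop (𝓝 0) := by
  simpa only [inner_folnerMean_folnerMean, sum_const_zero, mul_zero] using
    (tendsto_finsetSum (F m) fun h' _ => hF.tendsto_avg_add (-h')
      (norm_le_norm_single_zero_sq L) hLavg).const_mul ((F m).card : ℂ)⁻¹

theorem two_mul_iInf_le_norm_folnerMean_add (hF : IsFolner F) (k m : ℕ) :
    2 * ⨅ j, ‖folnerMean L F j‖ ≤ ‖folnerMean L F k + folnerMean L F m‖ := by
  have hj : ∀ j, 2 * ‖folnerMean L F j‖ ≤ ‖folnerMean L F k + folnerMean L F m‖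
      + ‖avgOp L F k (folnerMean L F j) - folnerMean L F j‖
      + ‖avgOp L F m (folnerMean L F j) - folnerMean L F j‖ := fun j => by
    have : (2 : ℝ) • folnerMean L F j = avgOp L F j (folnerMean L F k + folnerMean L F m)
        - (avgOp L F k (folnerMean L F j) - folnerMean L F j)
        - (avgOp L F m (folnerMean L F j) - folnerMean L F j) := by
      rw [map_add, avgOp_folnerMean_comm L j k, avgOp_folnerMean_comm L j m, two_smul]
      abel
    rw [← Real.norm_two, ← norm_smul, this]
    refine norm_sub_le_of_le (norm_sub_le_of_le ?_ le_rfl) le_rfl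
    exact norm_avgOp_le L j _
  have hlim := ((tendsto_const_nhds (x := ‖folnerMean L F k + folnerMean L F m‖)).add
    (tendsto_avgOp_folnerMean_sub L hF k).norm).add (tendsto_avgOp_folnerMean_sub L hF m).norm
  simp only [norm_zero, add_zero] at hlim
  refine ge_of_tendsto' hlim fun j => ?_
  linarith [hj j, ciInf_le (bddBelow_range_norm (folnerMean L F)) j]

theorem tendsto_norm_folnerMean (hF : IsFolner F)
    (hLavg : Tendsto (fun k => ((F k).card : ℂ)⁻¹ • ∑ h ∈ F k, L h) atTop (𝓝 0)) :
    Tendsto (fun k => ‖folnerMean L F k‖) atTop (𝓝 0) := by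
  set ρ := fun k => ‖folnerMean L F k‖
  set I := ⨅ k, ρ k
  have hρ : Tendsto ρ atTop (𝓝 I) :=
    tendsto_iInf_of_le_add (bddBelow_range_norm _)
      (fun m => by simpa using (tendsto_avgOp_folnerMean_sub L hF m).norm) (norm_folnerMean_le L)
  have hI : 0 ≤ I := le_ciInf fun k => norm_nonneg _
  -- `4 I ^ 2 ≤ ‖a k + a m‖ ^ 2 = ρ k ^ 2 + 2 re ⟪a k, a m⟫ + ρ m ^ 2 → I ^ 2 + ρ m ^ 2`
  have h3 : ∀ m, 3 * I ^ 2 ≤ ρ m ^ 2 := fun m => by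
    have hlim : Tendsto
        (fun k => ρ k ^ 2 + 2 * (⟪folnerMean L F k, folnerMean L F m⟫).re + ρ m ^ 2)
        atTop (𝓝 (I ^ 2 + 2 * 0 + ρ m ^ 2)) :=
      ((hρ.pow 2).add (((Complex.continuous_re.tendsto 0).comp
        (tendsto_inner_folnerMean L hF hLavg m)).const_mul 2)).add_const _
    have : (2 * I) ^ 2 ≤ I ^ 2 + 2 * 0 + ρ m ^ 2 := ge_of_tendsto' hlim fun k => by
      have h2 :=
        pow_le_pow_left₀ (by positivity) (two_mul_iInf_le_norm_folnerMean_add L hF k m) 2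
      rw [norm_add_sq (𝕜 := ℂ)] at h2
      exact h2
    nlinarith
  have : 3 * I ^ 2 ≤ I ^ 2 := ge_of_tendsto' (hρ.pow 2) h3
  have hI0 : I = 0 := by nlinarith
  rwa [hI0] at hρ

end GNS
end PositiveDefinite

section Translates

variable {G : Type*} [AddCommGroup G] {H : Type*} [SeminormedAddCommGroup H]
  [InnerProductSpace ℂ H]

local notation "⟪" a ", " b "⟫" => (inner ℂ a b : ℂ)

noncomputable def translateComb (x : G → H) (c : G →₀ ℂ) (g : G) : H :=
  Finsupp.linearCombination ℂ (fun a => x (g + a)) c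

theorem inner_translateComb (x : G → H) (c d : G →₀ ℂ) (g : G) :
    ⟪translateComb x c g, translateComb x d g⟫
      = c.sum fun a α => d.sum fun b β => conj α * β * ⟪x (g + a), x (g + b)⟫ := by
  simp only [translateComb, Finsupp.linearCombination_apply]
  rw [Finsupp.sum_inner]
  refine Finsupp.sum_congr fun a _ => ?_
  rw [inner_smul_left, Finsupp.inner_sum, Finsupp.mul_sum]
  refine Finsupp.sum_congr fun b _ => ?_
  rw [inner_smul_right, mul_assoc]

theorem translateComb_folnerMean (x : G → H) (L : G → ℂ) (F : ℕ → Finset G) (k : ℕ) (g : G) :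
    translateComb x (GNS.folnerMean L F k) g = ((F k).card : ℂ)⁻¹ • ∑ h ∈ F k, x (g + h) := by
  have h : @Eq (G →₀ ℂ) (GNS.folnerMean L F k)
      (((F k).card : ℂ)⁻¹ • ∑ h ∈ F k, Finsupp.single h 1) := GNS.folnerMean_eq L k
  simp [translateComb, h, map_sum]

variable [DecidableEq G] {F : ℕ → Finset G} {x : G → H} {C : ℝ}

theorem IsFolner.tendsto_avg_sub_avg_translateComb_folnerMean (hF : IsFolner F)
    (hbdd : ∀ g, ‖x g‖ ≤ C) (L : G → ℂ) (k : ℕ) :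
    Tendsto (fun n => ((F n).card : ℂ)⁻¹ • ∑ g ∈ F n, x g
      - ((F n).card : ℂ)⁻¹ • ∑ g ∈ F n, translateComb x (GNS.folnerMean L F k) g)
      atTop (𝓝 0) := by
  have hk : ((F k).card : ℂ) ≠ 0 := by exact_mod_cast (hF.1 k).card_pos.ne'
  have key : ∀ n, ((F n).card : ℂ)⁻¹ • ∑ g ∈ F n, x g
      - ((F n).card : ℂ)⁻¹ • ∑ g ∈ F n, translateComb x (GNS.folnerMean L F k) g
      = -(((F k).card : ℂ)⁻¹ • ∑ h ∈ F k, (((F n).card : ℂ)⁻¹ • ∑ g ∈ F n, x (g + h)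
        - ((F n).card : ℂ)⁻¹ • ∑ g ∈ F n, x g)) := fun n => by
    have hswap : ((F n).card : ℂ)⁻¹ • ∑ g ∈ F n, translateComb x (GNS.folnerMean L F k) g
        = ((F k).card : ℂ)⁻¹ • ∑ h ∈ F k, ((F n).card : ℂ)⁻¹ • ∑ g ∈ F n, x (g + h) := by
      simp only [translateComb_folnerMean, smul_sum]
      rw [sum_comm]
      exact sum_congr rfl fun _ _ => sum_congr rfl fun _ _ => smul_comm _ _ _
    rw [hswap, sum_sub_distrib, smul_sub, sum_const, ← Nat.cast_smul_eq_nsmul ℂ, smul_smul,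
      inv_mul_cancel₀ hk, one_smul, neg_sub]
  simpa only [key, sum_const_zero, smul_zero, neg_zero] using
    ((tendsto_finsetSum (F k) fun h _ => hF.tendsto_avg_add_sub_avg h hbdd).const_smul
      ((F k).card : ℂ)⁻¹).neg

variable {L : G → ℂ}
  (hL : ∀ h : G, Tendsto (fun n => ((F n).card : ℂ)⁻¹ • ∑ g ∈ F n, ⟪x (g + h), x g⟫)
    atTop (𝓝 (L h)))
include hL

theorem IsFolner.tendsto_avg_inner_add_add (hF : IsFolner F) (hbdd : ∀ g, ‖x g‖ ≤ C) (a b : G) :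
    Tendsto (fun n => ((F n).card : ℂ)⁻¹ • ∑ g ∈ F n, ⟪x (g + a), x (g + b)⟫)
      atTop (𝓝 (L (a - b))) := by
  have hu : ∀ g, ‖⟪x (g + (a - b)), x g⟫‖ ≤ C * C := fun g =>
    (norm_inner_le_norm _ _).trans (mul_le_mul (hbdd _) (hbdd _) (norm_nonneg _)
      ((norm_nonneg _).trans (hbdd 0)))
  simpa only [add_add_sub_cancel] using hF.tendsto_avg_add b hu (hL (a - b))

theorem IsFolner.tendsto_avg_inner_translateComb (hF : IsFolner F) (hbdd : ∀ g, ‖x g‖ ≤ C)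
    (c d : G →₀ ℂ) :
    Tendsto (fun n => ((F n).card : ℂ)⁻¹ • ∑ g ∈ F n, ⟪translateComb x c g, translateComb x d g⟫)
      atTop (𝓝 (pdForm L c d)) := by
  have key : ∀ n, ((F n).card : ℂ)⁻¹ • ∑ g ∈ F n, ⟪translateComb x c g, translateComb x d g⟫
      = c.sum fun a α => d.sum fun b β =>
          conj α * β * (((F n).card : ℂ)⁻¹ • ∑ g ∈ F n, ⟪x (g + a), x (g + b)⟫) := fun n => by
    simp only [inner_translateComb, Finsupp.sum, mul_sum, smul_eq_mul]
    rw [sum_comm]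
    refine sum_congr rfl fun a _ => ?_
    rw [sum_comm]
    exact sum_congr rfl fun b _ => sum_congr rfl fun g _ => by ring
  simp only [key]
  exact tendsto_finsetSum _ fun a _ => tendsto_finsetSum _ fun b _ =>
    (hF.tendsto_avg_inner_add_add hL hbdd a b).const_mul _

theorem IsFolner.tendsto_avg_norm_sq_translateComb (hF : IsFolner F) (hbdd : ∀ g, ‖x g‖ ≤ C)
    (c : G →₀ ℂ) :
    Tendsto (fun n => ((F n).card : ℝ)⁻¹ * ∑ g ∈ F n, ‖translateComb x c g‖ ^ 2)
      atTop (𝓝 (pdForm L c c).re) := by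
  have := (Complex.continuous_re.tendsto _).comp (hF.tendsto_avg_inner_translateComb hL hbdd c c)
  refine this.congr fun n => ?_
  simp [inner_self_eq_norm_sq_to_K, ← Complex.ofReal_pow]

theorem IsFolner.isPositiveDefinite (hF : IsFolner F) (hbdd : ∀ g, ‖x g‖ ≤ C) :
    IsPositiveDefinite L where
  conj_apply h := by
    have h1 := hF.tendsto_avg_inner_add_add hL hbdd 0 h
    rw [zero_sub] at h1
    refine tendsto_nhds_unique ((Complex.continuous_conj.tendsto _).comp (hL h)) (h1.congr ?_)
    simp [map_sum, inner_conj_symm]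
  re_pdForm_self_nonneg c :=
    ge_of_tendsto' (hF.tendsto_avg_norm_sq_translateComb hL hbdd c) fun n => by positivity

theorem IsFolner.exists_norm_avg_le_tendsto_norm_folnerMean [Fact (IsPositiveDefinite L)]
    (hF : IsFolner F) (hbdd : ∀ g, ‖x g‖ ≤ C) (k : ℕ) :
    ∃ r : ℕ → ℝ, Tendsto r atTop (𝓝 ‖GNS.folnerMean L F k‖) ∧
      ∀ n, ‖((F n).card : ℂ)⁻¹ • ∑ g ∈ F n, x g‖ ≤ r n := by
  set y := translateComb x (GNS.folnerMean L F k)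
  refine ⟨fun n => ‖((F n).card : ℂ)⁻¹ • ∑ g ∈ F n, x g - ((F n).card : ℂ)⁻¹ • ∑ g ∈ F n, y g‖
    + √(((F n).card : ℝ)⁻¹ * ∑ g ∈ F n, ‖y g‖ ^ 2), ?_, fun n => ?_⟩
  · have := (hF.tendsto_avg_sub_avg_translateComb_folnerMean hbdd L k).norm.add
      (hF.tendsto_avg_norm_sq_translateComb hL hbdd (GNS.folnerMean L F k)).sqrt
    rwa [norm_zero, zero_add] at this
  · linarith [norm_le_norm_add_norm_sub' (((F n).card : ℂ)⁻¹ • ∑ g ∈ F n, x g)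
      (((F n).card : ℂ)⁻¹ • ∑ g ∈ F n, y g), norm_avg_le_sqrt_avg_norm_sq (F n) y]

end Translates

theorem stmt9_general {G : Type*} [AddCommGroup G] [DecidableEq G]
    {H : Type*} [NormedAddCommGroup H] [InnerProductSpace ℂ H]
    (F : ℕ → Finset G) (hF : IsFolner F)
    (x : G → H) (C : ℝ) (hbdd : ∀ g, ‖x g‖ ≤ C)
    (L : G → ℂ)
    (hL : ∀ h : G, Tendsto
      (fun n => ((F n).card : ℂ)⁻¹ • ∑ g ∈ F n, (inner ℂ (x (g + h)) (x g) : ℂ))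
      atTop (nhds (L h)))
    (hLavg : Tendsto (fun k => ((F k).card : ℂ)⁻¹ • ∑ h ∈ F k, L h) atTop (nhds 0)) :
    Tendsto (fun n => ‖((F n).card : ℂ)⁻¹ • ∑ g ∈ F n, x g‖) atTop (nhds 0) := by
  have : Fact (IsPositiveDefinite L) := ⟨hF.isPositiveDefinite hL hbdd⟩
  exact tendsto_zero_of_forall_exists_le_tendsto (fun n => norm_nonneg _)
    (GNS.tendsto_norm_folnerMean L hF hLavg)
    (hF.exists_norm_avg_le_tendsto_norm_folnerMean hL hbdd)

/-- van der Corput lemma for Hilbert-space valued averages along a Følner sequence. -/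
theorem stmt9 {G : Type*} [AddCommGroup G] [Countable G] [DecidableEq G]
    {H : Type*} [NormedAddCommGroup H] [InnerProductSpace ℂ H] [CompleteSpace H]
    (F : ℕ → Finset G) (hF : IsFolner F)
    (x : G → H) (C : ℝ) (hbdd : ∀ g, ‖x g‖ ≤ C)
    (L : G → ℂ)
    (hL : ∀ h : G, Tendsto
      (fun n => ((F n).card : ℂ)⁻¹ • ∑ g ∈ F n, (inner ℂ (x (g + h)) (x g) : ℂ))
      atTop (nhds (L h)))
    (hLavg : Tendsto (fun k => ((F k).card : ℂ)⁻¹ • ∑ h ∈ F k, L h) atTop (nhds 0)) :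
    Tendsto (fun n => ‖((F n).card : ℂ)⁻¹ • ∑ g ∈ F n, x g‖) atTop (nhds 0) :=
  stmt9_general F hF x C hbdd L hL hLavg
end

section
/- Let K be a compact abelian group with Haar probability measure m, f : K → [0,1] measurable with ∫ f dm > 0, d ≥ 1, and c_1,…,c_{d−1} ∈ ℤ. Then the function φ(t) := ∫_{K^d} f(k+c_d s_1) f(k+c_d s_2) ⋯ f(k+c_d s_{d−1}) f(k + t − Σ_{i=1}^{d−1} c_i s_i) dm(k) dm(s_1) ⋯ dm(s_{d−1}) satisfies φ(0) > 0. -/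
open MeasureTheory Filter Topology

/-! Write `φ 0 = ∫ F` with `F s = ∫ ∏ⱼ f (k + aⱼ(s))`, the shifts `aⱼ` depending continuously on
`s`. For `[0,1]`-valued factors `|∏ xⱼ - ∏ yⱼ| ≤ ∑ |xⱼ - yⱼ|`, so `|F s - F s'|` is bounded by `L¹`
distances between translates of `f`; as translation is continuous in `L¹`, `F` is continuous. Jensen
gives `F 0 = ∫ f ^ d ≥ (∫ f) ^ d > 0`, so the nonnegative `F` is positive on a nonempty open set,
which has positive Haar measure. -/

section PiMeasurability

variable {ι : Type*} {X : ι → Type*} [∀ i, TopologicalSpace (X i)] [∀ i, MeasurableSpace (X i)]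
  [∀ i, OpensMeasurableSpace (X i)]

/-- Open sets of a product need not be measurable for the product σ-algebra, but a compact subset
of an open set is covered by finitely many open boxes inside it. -/
theorem IsCompact.exists_measurableSet_subset_isOpen {C O : Set (∀ i, X i)} (hC : IsCompact C)
    (hO : IsOpen O) (hCO : C ⊆ O) : ∃ S, MeasurableSet S ∧ C ⊆ S ∧ S ⊆ O := by
  choose! I u hu hsub using fun x (hx : x ∈ C) => isOpen_pi_iff.mp hO x (hCO hx)
  have hcov : C ⊆ ⋃ x ∈ C, (I x : Set ι).pi (u x) := fun x hx =>
    Set.mem_biUnion hx fun i hi => (hu x hx i hi).2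
  obtain ⟨t, htC, htfin, htcov⟩ := hC.elim_finite_subcover_image
    (fun x hx => isOpen_set_pi (I x).finite_toSet fun i hi => (hu x hx i hi).1) hcov
  refine ⟨⋃ x ∈ t, (I x : Set ι).pi (u x), ?_, htcov,
    Set.iUnion₂_subset fun x hx => hsub x (htC hx)⟩
  exact htfin.measurableSet_biUnion fun x hx =>
    .pi (I x).countable_toSet fun i hi => (hu x (htC hx) i hi).1.measurableSet

theorem Continuous.measurable_of_compactSpace_pi [CompactSpace (∀ i, X i)] {Y : Type*}
    [PseudoEMetricSpace Y] [MeasurableSpace Y] [BorelSpace Y] {F : (∀ i, X i) → Y}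
    (hF : Continuous F) : Measurable F := by
  refine measurable_of_isOpen fun U hU => ?_
  obtain ⟨V, hV_closed, hVU, hV_union, -⟩ := hU.exists_iUnion_isClosed
  choose S hS_meas hVS hSU using fun j =>
    ((hV_closed j).preimage hF).isCompact.exists_measurableSet_subset_isOpen (hU.preimage hF)
      (Set.preimage_mono (hVU j))
  suffices F ⁻¹' U = ⋃ j, S j from this ▸ .iUnion hS_meas
  refine (Set.iUnion_subset hSU).antisymm' ?_
  rw [← hV_union, Set.preimage_iUnion]
  exact Set.iUnion_mono hVS

end PiMeasurability

theorem abs_prod_sub_prod_le {ι : Type*} (s : Finset ι) {a b : ι → ℝ}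
    (ha : ∀ i, |a i| ≤ 1) (hb : ∀ i, |b i| ≤ 1) :
    |∏ i ∈ s, a i - ∏ i ∈ s, b i| ≤ ∑ i ∈ s, |a i - b i| := by
  classical
  induction s using Finset.induction_on with
  | empty => simp
  | insert j s hj ih =>
    rw [Finset.prod_insert hj, Finset.prod_insert hj, Finset.sum_insert hj]
    have hprod : |∏ i ∈ s, b i| ≤ 1 := by
      rw [Finset.abs_prod]; exact Finset.prod_le_one (fun i _ => abs_nonneg (b i)) fun i _ => hb i
    calc |a j * ∏ i ∈ s, a i - b j * ∏ i ∈ s, b i|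
        = |a j * (∏ i ∈ s, a i - ∏ i ∈ s, b i) + (a j - b j) * ∏ i ∈ s, b i| := by ring_nf
      _ ≤ |a j| * |∏ i ∈ s, a i - ∏ i ∈ s, b i| + |a j - b j| * |∏ i ∈ s, b i| := by
        rw [← abs_mul, ← abs_mul]; exact abs_add_le _ _
      _ ≤ 1 * ∑ i ∈ s, |a i - b i| + |a j - b j| * 1 := by
        gcongr
        · exact ha j
      _ = |a j - b j| + ∑ i ∈ s, |a i - b i| := by ring

section Translation

variable {K : Type*} [AddCommGroup K] [TopologicalSpace K] [IsTopologicalAddGroup K]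
  [MeasurableSpace K] [BorelSpace K] {m : Measure K} [m.IsAddRightInvariant]

theorem integral_abs_comp_add_sub_comp_add (f : K → ℝ) (a b : K) :
    ∫ x, |f (x + a) - f (x + b)| ∂m = ∫ x, |f (x + (a - b)) - f x| ∂m := by
  rw [← integral_add_right_eq_self (fun x => |f (x + (a - b)) - f x|) b]
  simp only [add_assoc, add_sub_cancel]

theorem tendsto_integral_abs_comp_add_sub [IsLocallyFiniteMeasure m] [m.InnerRegularCompactLTTop]
    {f : K → ℝ} (hf : MemLp f 1 m) :
    Tendsto (fun a => ∫ x, |f (x + a) - f x| ∂m) (𝓝 0) (𝓝 0) := by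
  let translate : C(K, C(K, K)) := ContinuousMap.curry ⟨fun p => p.2 + p.1, by fun_prop⟩
  have hmp (a : K) : MeasurePreserving (translate a) m m := measurePreserving_add_right m a
  let Φ (a : K) : Lp ℝ 1 m := Lp.compMeasurePreserving (translate a) (hmp a) (hf.toLp f)
  have hΦ : Continuous Φ :=
    continuous_const.compMeasurePreservingLp translate.continuous hmp ENNReal.one_ne_top
  have hΦ_ae (a : K) : Φ a =ᵐ[m] fun x => f (x + a) :=
    (Lp.coeFn_compMeasurePreserving _ _).trans
      ((hmp a).quasiMeasurePreserving.ae_eq_comp hf.coeFn_toLp)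
  have hnorm (a : K) : ‖Φ a - Φ 0‖ = ∫ x, |f (x + a) - f x| ∂m := by
    rw [L1.norm_eq_integral_norm]
    refine integral_congr_ae ?_
    filter_upwards [Lp.coeFn_sub (Φ a) (Φ 0), hΦ_ae a, hΦ_ae 0] with x h h₁ h₀
    rw [Real.norm_eq_abs, h, Pi.sub_apply, h₁, h₀, add_zero]
  have h : Tendsto (fun a => ‖Φ a - Φ 0‖) (𝓝 0) (𝓝 ‖Φ 0 - Φ 0‖) :=
    (hΦ.sub continuous_const).norm.tendsto 0
  rw [sub_self, norm_zero] at h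
  exact h.congr hnorm

variable [IsFiniteMeasure m] {ι : Type*} [Fintype ι] {f : ι → K → ℝ}

theorem abs_integral_prod_comp_add_sub_le (hf : ∀ i, Measurable (f i))
    (hf1 : ∀ i x, |f i x| ≤ 1) (a b : ι → K) :
    |∫ x, ∏ i, f i (x + a i) ∂m - ∫ x, ∏ i, f i (x + b i) ∂m| ≤
      ∑ i, ∫ x, |f i (x + (a i - b i)) - f i x| ∂m := by
  have hmeas (i : ι) (c : K) : Measurable fun x => f i (x + c) :=
    (hf i).comp (measurable_add_const c)
  have hint (c : ι → K) : Integrable (fun x => ∏ i, f i (x + c i)) m :=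
    .of_bound (Finset.measurable_prod _ fun i _ => hmeas i (c i)).aestronglyMeasurable 1
      (ae_of_all _ fun x => by
        rw [Real.norm_eq_abs, Finset.abs_prod]
        exact Finset.prod_le_one (fun i _ => abs_nonneg _) fun i _ => hf1 i _)
  have hint_sub (i : ι) : Integrable (fun x => |f i (x + a i) - f i (x + b i)|) m :=
    .of_bound ((hmeas i _).sub (hmeas i _)).abs.aestronglyMeasurable 2 (ae_of_all _ fun x => by
      rw [Real.norm_eq_abs, abs_abs]
      linarith [abs_sub (f i (x + a i)) (f i (x + b i)), hf1 i (x + a i), hf1 i (x + b i)])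
  calc |∫ x, ∏ i, f i (x + a i) ∂m - ∫ x, ∏ i, f i (x + b i) ∂m|
      = |∫ x, (∏ i, f i (x + a i) - ∏ i, f i (x + b i)) ∂m| := by
        rw [integral_sub (hint a) (hint b)]
    _ ≤ ∫ x, |∏ i, f i (x + a i) - ∏ i, f i (x + b i)| ∂m := abs_integral_le_integral_abs
    _ ≤ ∫ x, ∑ i, |f i (x + a i) - f i (x + b i)| ∂m :=
        integral_mono ((hint a).sub (hint b)).abs (integrable_finsetSum _ fun i _ => hint_sub i)
          fun x => abs_prod_sub_prod_le _ (fun i => hf1 i _) fun i => hf1 i _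
    _ = ∑ i, ∫ x, |f i (x + (a i - b i)) - f i x| ∂m := by
        rw [integral_finsetSum _ fun i _ => hint_sub i]
        simp only [integral_abs_comp_add_sub_comp_add]

theorem continuous_integral_prod_comp_add [m.InnerRegularCompactLTTop]
    (hf : ∀ i, Measurable (f i)) (hf1 : ∀ i x, |f i x| ≤ 1) :
    Continuous fun a : ι → K => ∫ x, ∏ i, f i (x + a i) ∂m := by
  refine continuous_iff_continuousAt.2 fun b => ?_
  have hmemLp (i : ι) : MemLp (f i) 1 m :=
    .of_bound (hf i).aestronglyMeasurable 1 (ae_of_all _ (hf1 i))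
  have hbound : Tendsto (fun a : ι → K => ∑ i, ∫ x, |f i (x + (a i - b i)) - f i x| ∂m)
      (𝓝 b) (𝓝 0) := by
    simpa using tendsto_finsetSum Finset.univ fun i _ =>
      (tendsto_integral_abs_comp_add_sub (hmemLp i)).comp
        (((continuous_apply i).sub continuous_const).tendsto' b 0 (sub_self _))
  exact tendsto_iff_dist_tendsto_zero.2
    (squeeze_zero (fun _ => dist_nonneg) (fun a => abs_integral_prod_comp_add_sub_le hf hf1 a b)
      hbound)

end Translation

theorem pow_integral_le_integral_pow {α : Type*} [MeasurableSpace α] {μ : Measure α}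
    [IsProbabilityMeasure μ] {f : α → ℝ} (hf0 : 0 ≤ f) (hf : Integrable f μ) (n : ℕ)
    (hfn : Integrable (fun x => f x ^ n) μ) : (∫ x, f x ∂μ) ^ n ≤ ∫ x, f x ^ n ∂μ :=
  (convexOn_pow n).map_integral_le (continuous_pow n).continuousOn isClosed_Ici
    (ae_of_all _ hf0) hf hfn

theorem Continuous.integral_pos_of_nonneg_of_pos {X : Type*} [TopologicalSpace X] [CompactSpace X]
    [MeasurableSpace X] {μ : Measure X} [IsFiniteMeasure μ] [μ.IsOpenPosMeasure] {F : X → ℝ}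
    (hF : Continuous F) (hF_meas : Measurable F) (hF0 : 0 ≤ F) {x₀ : X} (hx₀ : 0 < F x₀) :
    0 < ∫ x, F x ∂μ := by
  obtain ⟨C, hC⟩ := isCompact_univ.exists_bound_of_continuousOn hF.continuousOn
  have hint : Integrable F μ :=
    .of_bound hF_meas.aestronglyMeasurable C (ae_of_all _ fun x => hC x (Set.mem_univ x))
  rw [integral_pos_iff_support_of_nonneg hF0 hint]
  exact ((isOpen_lt continuous_const hF).measure_pos μ ⟨x₀, hx₀⟩).trans_le
    (measure_mono fun x hx => ne_of_gt hx)

/-- `n = d - 1`; the coefficients `c_1, …, c_{d-1}` are `c` and `c_d` is `cd`. -/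
theorem stmt12 {K : Type*} [AddCommGroup K] [TopologicalSpace K] [IsTopologicalAddGroup K]
    [CompactSpace K] [MeasurableSpace K] [BorelSpace K]
    (m : Measure K) [m.IsAddHaarMeasure] [IsProbabilityMeasure m]
    (f : K → ℝ) (hf : Measurable f) (hf01 : ∀ x, f x ∈ Set.Icc (0 : ℝ) 1)
    (hfpos : 0 < ∫ x, f x ∂m)
    (n : ℕ) (c : Fin n → ℤ) (cd : ℤ)
    (φ : K → ℝ)
    (hφ : ∀ t : K, φ t = ∫ s : Fin n → K,
      (∫ k, (∏ i, f (k + cd • s i)) * f (k + t - ∑ i, c i • s i) ∂m)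
        ∂(Measure.pi fun _ => m)) :
    0 < φ 0 := by
  let shifts (s : Fin n → K) : Fin (n + 1) → K := Fin.snoc (fun i => cd • s i) (-∑ i, c i • s i)
  let F (s : Fin n → K) : ℝ := ∫ k, ∏ j, f (k + shifts s j) ∂m
  have hφF : φ 0 = ∫ s, F s ∂(Measure.pi fun _ => m) := by
    simp [hφ, F, shifts, Fin.prod_univ_castSucc, sub_eq_add_neg]
  have hf1 (x : K) : |f x| ≤ 1 := (abs_of_nonneg (hf01 x).1).trans_le (hf01 x).2
  have hF : Continuous F :=
    (continuous_integral_prod_comp_add (fun _ => hf) fun _ => hf1).comp (by fun_prop)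
  have hF0 : F 0 = ∫ k, f k ^ (n + 1) ∂m := by simp [F, shifts, Fin.prod_univ_castSucc, pow_succ]
  have hint (p : ℕ) : Integrable (fun x => f x ^ p) m :=
    .of_bound (hf.pow_const p).aestronglyMeasurable 1 (ae_of_all _ fun x => by
      rw [norm_pow, Real.norm_eq_abs]; exact pow_le_one₀ (abs_nonneg _) (hf1 x))
  rw [hφF]
  refine hF.integral_pos_of_nonneg_of_pos hF.measurable_of_compactSpace_pi
    (fun s => integral_nonneg fun k => Finset.prod_nonneg fun j _ => (hf01 _).1) (x₀ := 0) ?_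
  rw [hF0]
  exact (pow_pos hfpos _).trans_le (pow_integral_le_integral_pow (fun x => (hf01 x).1)
    (by simpa using hint 1) _ (hint _))
end
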